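/- Fix d ≥ 2, k ∈ ℕ, and natural numbers q ≤ m. For A ⊂ B_n define C_{m,q}^{(n)}(A) = |{M ⊂ B_n \ (A ∪ ∂A) : |M| = m and |CC(M)| = q}|. Then: (i) there exists a constant C < ∞ such that for all n and all A ⊂ B_n with |A| = k−1, |C_{m,m}^{(n)}(A) − |B_n|^m/m!| ≤ C·|B_n|^{m−1}; (ii) for each q ≤ m−1 there exists a constant c_q < ∞, independent of A, such that C_{m,q}^{(n)}(A) ≤ c_q·|B_n|^{q} for all n and all A ⊂ B_n with |A| = k−1. -/

import Mathlib

open MeasureTheory ProbabilityTheory Filter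

noncomputable section

abbrev V (d : ℕ) := Fin d → ℤ

/-- Nearest-neighbor adjacency on `ℤ^d`: `|x - y|₁ = 1`. -/
def adj {d : ℕ} (x y : V d) : Prop := (∑ i, |x i - y i|) = 1

instance {d : ℕ} (x y : V d) : Decidable (adj x y) := by unfold adj; infer_instance

/-- The finite set of nearest neighbors of a site. -/
def nbrs {d : ℕ} (z : V d) : Finset (V d) :=
  (Finset.Icc (z - 1) (z + 1)).filter (fun y => adj z y)

/-- The local speed measure `π_z = ∑_{y ∼ z} w z y`. -/
def speed {d : ℕ} (w : V d → V d → ℝ) (z : V d) : ℝ := ∑ y ∈ nbrs z, w z y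

/-- The box `B_n = [-n, n]^d ∩ ℤ^d`. -/
def box (d n : ℕ) : Finset (V d) := Finset.Icc (fun _ => -(n : ℤ)) (fun _ => (n : ℤ))

/-- The `k`-th smallest element (1-indexed, with multiplicity) of a multiset of reals. -/
def orderStat (s : Multiset ℝ) (k : ℕ) : ℝ := (s.sort (· ≤ ·)).getD (k - 1) 0

/-- `π_{k, B_n}`, the `k`-th order statistic of `{π_z : z ∈ B_n}`. -/
def piOrd {d : ℕ} (w : V d → V d → ℝ) (n k : ℕ) : ℝ :=
  orderStat ((box d n).val.map (speed w)) k

/-- The Dirichlet matrix `-1_S L^w 1_S` on a finite set `S`. -/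
def dMat {d : ℕ} (w : V d → V d → ℝ) (S : Finset (V d)) : Matrix S S ℝ :=
  fun x y => (if (x : V d) = (y : V d) then speed w (x : V d) else 0) -
    (if adj (x : V d) (y : V d) then w (x : V d) (y : V d) else 0)

/-- The `k`-th smallest eigenvalue (1-indexed, with multiplicity) of a symmetric real
matrix (junk value `0` if the matrix is not symmetric). -/
def eigs {m : Type*} [Fintype m] [DecidableEq m] (A : Matrix m m ℝ) (k : ℕ) : ℝ :=
  if hA : A.IsHermitian then orderStat (Finset.univ.val.map hA.eigenvalues) k else 0

/-- The set `𝓑_l^{(n)} = B_n \ {z_{(1,n)}, …, z_{(l-1,n)}}`: the box with the sites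
carrying the `l - 1` smallest values of `π` removed. -/
def BB {d : ℕ} (w : V d → V d → ℝ) (n l : ℕ) : Finset (V d) :=
  (box d n).filter (fun z => piOrd w n l ≤ speed w z)

/-- `g(u) = sup {s ≥ 0 : F s = u^{-1/2}}`. -/
def gfun (F : ℝ → ℝ) (u : ℝ) : ℝ := sSup {s : ℝ | 0 ≤ s ∧ F s = u ^ (-(1/2 : ℝ))}

/-- `G` varies regularly at zero with index `γ`. -/
def RegVarZero (G : ℝ → ℝ) (γ : ℝ) : Prop :=
  ∀ b > (0:ℝ), Tendsto (fun a => G (a * b) / G a) (nhdsWithin 0 (Set.Ioi 0)) (nhds (b ^ γ))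

/-- `G` varies regularly at infinity with index `ρ`. -/
def RegVarInfty (G : ℝ → ℝ) (ρ : ℝ) : Prop :=
  ∀ l > (0:ℝ), Tendsto (fun u => G (l * u) / G u) atTop (nhds (l ^ ρ))

/-- The conductances are i.i.d., positive, symmetric, with marginal distribution
function `F`. -/
def IIDConductances {d : ℕ} {Ω : Type*} [MeasurableSpace Ω] (P : Measure Ω)
    (w : Ω → V d → V d → ℝ) (F : ℝ → ℝ) : Prop :=
  (∀ ω x y, w ω x y = w ω y x) ∧
  (∀ ω x y, adj x y → 0 < w ω x y) ∧
  (∀ x y : V d, Measurable fun ω => w ω x y) ∧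
  iIndepFun
    (fun (p : V d × Fin d) ω => w ω p.1 (p.1 + Pi.single p.2 1)) P ∧
  (∀ (x : V d) (i : Fin d) (u : ℝ),
    (P {ω | w ω x (x + Pi.single i 1) ≤ u}).toReal = F u)

/-- Assumption A with the choice of `ε₁` left existential (as used for the
almost-sure convergence statement). -/
def AssumptionA0 (F : ℝ → ℝ) (γ : ℝ) : Prop :=
  Continuous F ∧ RegVarZero F γ ∧ 0 ≤ γ ∧ γ < 1/4 ∧
  (∃ astar > (0:ℝ), ∀ a, 0 < a → a ≤ astar → ∀ b, 0 ≤ b → b ≤ 1 → b * F a ≤ F (a * b)) ∧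
  (γ = 0 → ∃ ε₁ ∈ Set.Ioo (0:ℝ) 1,
    Antitone (fun n : ℕ => (n : ℝ) ^ ((2:ℝ) + ε₁) * gfun F n) ∧
    Tendsto (fun n : ℕ => (n : ℝ) ^ ((2:ℝ) + ε₁) * gfun F n) atTop (nhds 0))

/-- Assumption A together with a fixed admissible exponent `ε₁`:
if `γ = 0` then `n^{2+ε₁} g(n)` decreases monotonically to `0`;
if `γ > 0` then `1/(2γ) > 2 + ε₁`. -/
def AssumptionAe (F : ℝ → ℝ) (γ ε₁ : ℝ) : Prop :=
  Continuous F ∧ RegVarZero F γ ∧ 0 ≤ γ ∧ γ < 1/4 ∧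
  (∃ astar > (0:ℝ), ∀ a, 0 < a → a ≤ astar → ∀ b, 0 ≤ b → b ≤ 1 → b * F a ≤ F (a * b)) ∧
  0 < ε₁ ∧ ε₁ < 1 ∧
  (γ = 0 →
    Antitone (fun n : ℕ => (n : ℝ) ^ ((2:ℝ) + ε₁) * gfun F n) ∧
    Tendsto (fun n : ℕ => (n : ℝ) ^ ((2:ℝ) + ε₁) * gfun F n) atTop (nhds 0)) ∧
  (0 < γ → 2 + ε₁ < 1 / (2 * γ))

/-- `A ∪ ∂A`: the set together with its outer site boundary. -/
def closNbr {d : ℕ} (A : Finset (V d)) : Finset (V d) := A ∪ A.biUnion nbrs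

open scoped Classical in
/-- The number `|CC(M)|` of connected components of `M` in the nearest-neighbor
graph on `ℤ^d`. -/
def ncc {d : ℕ} (M : Finset (V d)) : ℕ :=
  (M.image (fun x => M.filter (fun y =>
    Relation.ReflTransGen (fun a b => adj a b ∧ a ∈ M ∧ b ∈ M) x y))).card

open scoped Classical in
/-- The number `C_{m,q}^{(n)}(A)` of subsets `M ⊂ B_n \ (A ∪ ∂A)` with `|M| = m`
and `|CC(M)| = q`. -/
def Cmq {d : ℕ} (n m q : ℕ) (A : Finset (V d)) : ℕ :=
  ((Finset.powersetCard m (box d n \ closNbr A)).filter (fun M => ncc M = q)).card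

namespace Counting

variable {d : ℕ}

lemma adj_symm {x y : V d} (h : adj x y) : adj y x := by
  unfold adj at *
  rw [← h]
  exact Finset.sum_congr rfl fun i _ => abs_sub_comm _ _

lemma adj_irrefl (x : V d) : ¬ adj x x := by
  unfold adj; simp

/-- L¹ distance on `ℤ^d`. -/
def dist1 (x y : V d) : ℤ := ∑ i, |x i - y i|

lemma dist1_comm (x y : V d) : dist1 x y = dist1 y x :=
  Finset.sum_congr rfl fun i _ => abs_sub_comm _ _

lemma dist1_self (x : V d) : dist1 x x = 0 := by
  unfold dist1; simp

lemma dist1_triangle (x y z : V d) : dist1 x z ≤ dist1 x y + dist1 y z := by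
  unfold dist1
  rw [← Finset.sum_add_distrib]
  exact Finset.sum_le_sum fun i _ => abs_sub_le _ _ _

lemma adj_dist1 {x y : V d} (h : adj x y) : dist1 x y = 1 := h

/-- closed L¹/L∞ ball of radius `R`. -/
def ball (x : V d) (R : ℕ) : Finset (V d) :=
  Finset.Icc (fun i => x i - R) (fun i => x i + R)

lemma mem_ball_of_dist1 {x y : V d} {R : ℕ} (h : dist1 x y ≤ R) : y ∈ ball x R := by
  rw [ball, Finset.mem_Icc]
  have habs : ∀ i, |x i - y i| ≤ R := by
    intro i
    refine le_trans ?_ h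
    exact Finset.single_le_sum (f := fun j => |x j - y j|) (fun j _ => abs_nonneg _) (Finset.mem_univ i)
  constructor <;> intro i <;> have := abs_le.mp (habs i) <;> simp <;> omega

lemma card_ball (x : V d) (R : ℕ) : (ball x R).card = (2 * R + 1) ^ d := by
  rw [ball, Pi.card_Icc]
  have : ∀ i : Fin d, (Finset.Icc (x i - (R:ℤ)) (x i + R)).card = 2 * R + 1 := by
    intro i
    rw [Int.card_Icc]
    omega
  simp [this]

/-- The step relation inside `M`. -/
abbrev rel (M : Finset (V d)) (a b : V d) : Prop := adj a b ∧ a ∈ M ∧ b ∈ M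

lemma rel_symm (M : Finset (V d)) : Symmetric (rel M) :=
  fun _ _ h => ⟨adj_symm h.1, h.2.2, h.2.1⟩

lemma reach_symm {M : Finset (V d)} {x y : V d}
    (h : Relation.ReflTransGen (rel M) x y) : Relation.ReflTransGen (rel M) y x :=
  have : Std.Symm (rel M) := ⟨rel_symm M⟩; Std.Symm.symm _ _ h

lemma mem_of_reach {M : Finset (V d)} {x y : V d} (hx : x ∈ M)
    (h : Relation.ReflTransGen (rel M) x y) : y ∈ M := by
  induction h with
  | refl => exact hx
  | tail _ hbc _ => exact hbc.2.2

open scoped Classical in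
/-- The connected component of `x` in `M`. -/
noncomputable def comp (M : Finset (V d)) (x : V d) : Finset (V d) :=
  M.filter (fun y => Relation.ReflTransGen (fun a b => adj a b ∧ a ∈ M ∧ b ∈ M) x y)

lemma ncc_eq (M : Finset (V d)) : ncc M = (M.image (comp M)).card := rfl

lemma mem_comp {M : Finset (V d)} {x y : V d} :
    y ∈ comp M x ↔ y ∈ M ∧ Relation.ReflTransGen (rel M) x y := by
  classical
  simp [comp, rel]

lemma mem_comp_self {M : Finset (V d)} {x : V d} (hx : x ∈ M) : x ∈ comp M x :=
  mem_comp.mpr ⟨hx, Relation.ReflTransGen.refl⟩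

lemma comp_subset {M : Finset (V d)} {x : V d} : comp M x ⊆ M := by
  classical
  exact fun y hy => (mem_comp.mp hy).1

lemma comp_eq_of_mem {M : Finset (V d)} {x y : V d} (hy : y ∈ comp M x) :
    comp M x = comp M y := by
  have hxy := (mem_comp.mp hy).2
  ext z
  simp only [mem_comp]
  exact ⟨fun hz => ⟨hz.1, (reach_symm hxy).trans hz.2⟩,
    fun hz => ⟨hz.1, hxy.trans hz.2⟩⟩

/-- A canonical representative of a nonempty finset. -/
noncomputable def pick (c : Finset (V d)) : V d :=
  if h : c.Nonempty then h.choose else 0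

lemma pick_mem {c : Finset (V d)} (h : c.Nonempty) : pick c ∈ c := by
  rw [pick, dif_pos h]; exact h.choose_spec

/-- one representative for each connected component of `M`. -/
noncomputable def reps (M : Finset (V d)) : Finset (V d) :=
  (M.image (comp M)).image pick

lemma comp_pick_eq {M : Finset (V d)} {c : Finset (V d)}
    (hc : c ∈ M.image (comp M)) : c = comp M (pick c) := by
  obtain ⟨x, hx, rfl⟩ := Finset.mem_image.mp hc
  exact comp_eq_of_mem (pick_mem ⟨x, mem_comp_self hx⟩)

lemma pick_injOn (M : Finset (V d)) :
    Set.InjOn pick ((M.image (comp M) : Finset (Finset (V d))) : Set (Finset (V d))) := by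
  intro c1 h1 c2 h2 h
  rw [comp_pick_eq (Finset.mem_coe.mp h1), comp_pick_eq (Finset.mem_coe.mp h2), h]

lemma card_reps (M : Finset (V d)) : (reps M).card = ncc M := by
  rw [ncc_eq, reps, Finset.card_image_of_injOn (pick_injOn M)]

lemma reps_subset (M : Finset (V d)) : reps M ⊆ M := by
  intro r hr
  obtain ⟨c, hc, rfl⟩ := Finset.mem_image.mp hr
  obtain ⟨x, hx, rfl⟩ := Finset.mem_image.mp hc
  exact comp_subset (pick_mem ⟨x, mem_comp_self hx⟩)

/-- The nearest-neighbor graph on the sites of `M`. -/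
def graphOn (M : Finset (V d)) : SimpleGraph ↥M where
  Adj a b := adj (a : V d) (b : V d)
  symm := ⟨fun _ _ h => adj_symm h⟩
  loopless := ⟨fun a h => adj_irrefl _ h⟩

lemma reach_lift {M : Finset (V d)} {x y : V d} (hx : x ∈ M)
    (h : Relation.ReflTransGen (rel M) x y) :
    ∃ hy : y ∈ M, Relation.ReflTransGen (graphOn M).Adj ⟨x, hx⟩ ⟨y, hy⟩ := by
  induction h with
  | refl => exact ⟨hx, Relation.ReflTransGen.refl⟩
  | tail _ hbc ih =>
      obtain ⟨hb, hreach⟩ := ih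
      exact ⟨hbc.2.2, hreach.tail hbc.1⟩

lemma walk_dist1 {M : Finset (V d)} {a b : ↥M} (w : (graphOn M).Walk a b) :
    dist1 (a : V d) (b : V d) ≤ w.length := by
  induction w with
  | nil => simp [dist1_self]
  | @cons u v c h p ih =>
      calc dist1 (u : V d) (c : V d) ≤ dist1 (u : V d) (v : V d) + dist1 (v : V d) (c : V d) :=
            dist1_triangle _ _ _
        _ ≤ 1 + p.length := by
            have h1 : dist1 (u : V d) (v : V d) = 1 := adj_dist1 h
            omega
        _ = (SimpleGraph.Walk.cons h p).length := by
            rw [SimpleGraph.Walk.length_cons]; push_cast; ring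

lemma reach_dist1 {M : Finset (V d)} {x y : V d} (hx : x ∈ M)
    (h : Relation.ReflTransGen (rel M) x y) : dist1 x y ≤ M.card := by
  classical
  obtain ⟨hy, hreach⟩ := reach_lift hx h
  have hre : (graphOn M).Reachable ⟨x, hx⟩ ⟨y, hy⟩ :=
    (SimpleGraph.reachable_iff_reflTransGen _ _).mpr hreach
  obtain ⟨w⟩ := hre
  have hlt : w.toPath.1.length < Fintype.card ↥M := w.toPath.2.length_lt
  have hcard : Fintype.card ↥M = M.card := Fintype.card_coe M
  have hd : dist1 x y ≤ (w.toPath.1.length : ℤ) := walk_dist1 w.toPath.1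
  omega

lemma subset_biUnion_reps {M : Finset (V d)} :
    M ⊆ (reps M).biUnion (fun r => ball r M.card) := by
  intro y hy
  have hc : comp M y ∈ M.image (comp M) := Finset.mem_image_of_mem _ hy
  have hpm : pick (comp M y) ∈ comp M y := pick_mem ⟨y, mem_comp_self hy⟩
  have hrep : pick (comp M y) ∈ reps M := Finset.mem_image_of_mem _ hc
  refine Finset.mem_biUnion.mpr ⟨pick (comp M y), hrep, ?_⟩
  apply mem_ball_of_dist1
  rw [dist1_comm]
  exact reach_dist1 hy (mem_comp.mp hpm).2

/-- No two sites of `M` are adjacent. -/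
def Sparse (M : Finset (V d)) : Prop :=
  ∀ x ∈ M, ∀ y ∈ M, ¬ adj x y

instance (M : Finset (V d)) : Decidable (Sparse M) := by
  unfold Sparse; infer_instance

lemma reach_eq_of_sparse {M : Finset (V d)} (hs : Sparse M) {x y : V d}
    (h : Relation.ReflTransGen (rel M) x y) : x = y := by
  induction h with
  | refl => rfl
  | tail _ hbc ih => exact absurd hbc.1 (hs _ hbc.2.1 _ hbc.2.2)

lemma comp_eq_singleton {M : Finset (V d)} (hs : Sparse M) {x : V d} (hx : x ∈ M) :
    comp M x = {x} := by
  ext z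
  simp only [mem_comp, Finset.mem_singleton]
  constructor
  · rintro ⟨_, hr⟩; exact (reach_eq_of_sparse hs hr).symm
  · rintro rfl; exact ⟨hx, Relation.ReflTransGen.refl⟩

lemma ncc_of_sparse {M : Finset (V d)} (hs : Sparse M) : ncc M = M.card := by
  rw [ncc_eq]
  have : M.image (comp M) = M.image (fun x => ({x} : Finset (V d))) :=
    Finset.image_congr (fun x hx => comp_eq_singleton hs hx)
  rw [this, Finset.card_image_of_injective _ Finset.singleton_injective]

lemma ncc_lt_of_not_sparse {M : Finset (V d)} (hs : ¬ Sparse M) : ncc M < M.card := by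
  rw [Sparse] at hs
  push_neg at hs
  obtain ⟨x, hx, y, hy, hadj⟩ := hs
  have hne : x ≠ y := fun h => adj_irrefl x (h ▸ hadj)
  have hcomp : comp M x = comp M y :=
    comp_eq_of_mem (mem_comp.mpr ⟨hy, Relation.ReflTransGen.single ⟨hadj, hx, hy⟩⟩)
  have himg : M.image (comp M) = (M.erase y).image (comp M) := by
    apply Finset.Subset.antisymm
    · intro c hc
      obtain ⟨z, hz, rfl⟩ := Finset.mem_image.mp hc
      by_cases hzy : z = y
      · subst hzy
        exact Finset.mem_image.mpr ⟨x, Finset.mem_erase.mpr ⟨hne, hx⟩, hcomp⟩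
      · exact Finset.mem_image.mpr ⟨z, Finset.mem_erase.mpr ⟨hzy, hz⟩, rfl⟩
    · exact Finset.image_subset_image (Finset.erase_subset _ _)
  rw [ncc_eq, himg]
  calc ((M.erase y).image (comp M)).card ≤ (M.erase y).card := Finset.card_image_le
    _ < M.card := Finset.card_erase_lt_of_mem hy

lemma ncc_eq_card_iff_sparse {M : Finset (V d)} : ncc M = M.card ↔ Sparse M := by
  constructor
  · intro h
    by_contra hs
    exact absurd h (Nat.ne_of_lt (ncc_lt_of_not_sparse hs))
  · exact ncc_of_sparse

lemma choose_le_pow (N q : ℕ) : N.choose q ≤ N ^ q := by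
  calc N.choose q ≤ q.factorial * N.choose q :=
        Nat.le_mul_of_pos_left _ q.factorial_pos
    _ = N.descFactorial q := (Nat.descFactorial_eq_factorial_mul_choose N q).symm
    _ ≤ N ^ q := Nat.descFactorial_le_pow N q

lemma cmq_le (n m q : ℕ) (A : Finset (V d)) :
    Cmq n m q A ≤ 2 ^ (q * (2 * m + 1) ^ d) * (box d n).card ^ q := by
  classical
  set S := box d n \ closNbr A with hS
  set T := (Finset.powersetCard m S).filter (fun M => ncc M = q) with hT
  have hCmq : Cmq n m q A = T.card := by
    rw [Cmq, hT]
  rw [hCmq]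
  have hmem : ∀ M ∈ T, M.card = m ∧ ncc M = q ∧ M ⊆ box d n := by
    intro M hM
    rw [hT, Finset.mem_filter, Finset.mem_powersetCard] at hM
    exact ⟨hM.1.2, hM.2, hM.1.1.trans (Finset.sdiff_subset)⟩
  have hfiber : ∀ R ∈ T.image reps,
      (T.filter (fun M => reps M = R)).card ≤ 2 ^ (q * (2 * m + 1) ^ d) := by
    intro R hR
    obtain ⟨M₀, hM₀, rfl⟩ := Finset.mem_image.mp hR
    have hcardR : (reps M₀).card = q := by
      rw [card_reps]; exact (hmem M₀ hM₀).2.1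
    calc (T.filter (fun M => reps M = reps M₀)).card
        ≤ ((reps M₀).biUnion (fun r => ball r m)).powerset.card := by
          apply Finset.card_le_card
          intro M hM
          rw [Finset.mem_filter] at hM
          rw [Finset.mem_powerset]
          have hsub := subset_biUnion_reps (M := M)
          rw [hM.2, (hmem M hM.1).1] at hsub
          exact hsub
      _ = 2 ^ ((reps M₀).biUnion (fun r => ball r m)).card := Finset.card_powerset _
      _ ≤ 2 ^ (q * (2 * m + 1) ^ d) := by
          apply Nat.pow_le_pow_right (by norm_num)
          calc ((reps M₀).biUnion (fun r => ball r m)).card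
              ≤ ∑ r ∈ reps M₀, (ball r m).card := Finset.card_biUnion_le
            _ = q * (2 * m + 1) ^ d := by
                rw [Finset.sum_congr rfl (fun r _ => card_ball r m),
                  Finset.sum_const, hcardR, smul_eq_mul]
  calc T.card ≤ 2 ^ (q * (2 * m + 1) ^ d) * (T.image reps).card :=
        Finset.card_le_mul_card_image _ _ hfiber
    _ ≤ 2 ^ (q * (2 * m + 1) ^ d) * (box d n).card ^ q := by
        apply Nat.mul_le_mul_left
        calc (T.image reps).card ≤ ((box d n).powersetCard q).card := by
              apply Finset.card_le_card
              intro R hR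
              obtain ⟨M, hM, rfl⟩ := Finset.mem_image.mp hR
              rw [Finset.mem_powersetCard]
              refine ⟨(reps_subset M).trans (hmem M hM).2.2, ?_⟩
              rw [card_reps]; exact (hmem M hM).2.1
          _ = (box d n).card.choose q := Finset.card_powersetCard _ _
          _ ≤ (box d n).card ^ q := choose_le_pow _ _

lemma pow_diff_le {a b : ℝ} (hb : 0 ≤ b) (hba : b ≤ a) :
    ∀ m : ℕ, a ^ (m + 1) - b ^ (m + 1) ≤ (m + 1) * (a - b) * a ^ m
  | 0 => by simp
  | m + 1 => by
      have ih := pow_diff_le hb hba m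
      have ha : 0 ≤ a := hb.trans hba
      have hbm : b ^ (m + 1) ≤ a ^ (m + 1) := pow_le_pow_left₀ hb hba _
      have key : a ^ (m + 2) - b ^ (m + 2)
          = a * (a ^ (m + 1) - b ^ (m + 1)) + (a - b) * b ^ (m + 1) := by ring
      rw [key]
      have h1 : a * (a ^ (m + 1) - b ^ (m + 1)) ≤ a * ((m + 1) * (a - b) * a ^ m) :=
        mul_le_mul_of_nonneg_left ih ha
      have h2 : (a - b) * b ^ (m + 1) ≤ (a - b) * a ^ (m + 1) :=
        mul_le_mul_of_nonneg_left hbm (by linarith)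
      have h3 : a * ((m + 1) * (a - b) * a ^ m) = (m + 1) * (a - b) * a ^ (m + 1) := by
        ring
      push_cast
      nlinarith [h1, h2, h3]

open scoped Classical in
/-- A canonical adjacent pair inside a non-sparse set. -/
noncomputable def badPair (M : Finset (V d)) : (V d) × (V d) :=
  if h : ∃ p : (V d) × (V d), p.1 ∈ M ∧ p.2 ∈ M ∧ adj p.1 p.2 then h.choose else (0, 0)

lemma badPair_spec {M : Finset (V d)} (h : ¬ Sparse M) :
    (badPair M).1 ∈ M ∧ (badPair M).2 ∈ M ∧ adj (badPair M).1 (badPair M).2 := by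
  classical
  rw [Sparse] at h
  push_neg at h
  obtain ⟨x, hx, y, hy, hadj⟩ := h
  have hex : ∃ p : (V d) × (V d), p.1 ∈ M ∧ p.2 ∈ M ∧ adj p.1 p.2 := ⟨(x, y), hx, hy, hadj⟩
  rw [badPair, dif_pos hex]
  exact hex.choose_spec

lemma card_nbrs_le (z : V d) : (nbrs z).card ≤ 3 ^ d := by
  calc (nbrs z).card ≤ (Finset.Icc (z - 1) (z + 1)).card :=
        Finset.card_le_card (Finset.filter_subset _ _)
    _ = 3 ^ d := by
        rw [Pi.card_Icc]
        have h3 : ∀ i : Fin d, (Finset.Icc ((z - 1) i) ((z + 1) i)).card = 3 := by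
          intro i
          rw [Pi.sub_apply, Pi.add_apply, Pi.one_apply, Int.card_Icc]
          omega
        rw [Finset.prod_congr rfl (fun i _ => h3 i), Finset.prod_const, Finset.card_univ,
          Fintype.card_fin]

lemma card_closNbr_le (A : Finset (V d)) : (closNbr A).card ≤ A.card * (3 ^ d + 1) := by
  calc (closNbr A).card ≤ A.card + (A.biUnion nbrs).card := by
        rw [closNbr]; exact (Finset.card_union_le _ _)
    _ ≤ A.card + ∑ a ∈ A, (nbrs a).card := by
        exact Nat.add_le_add_left Finset.card_biUnion_le _
    _ ≤ A.card + A.card * 3 ^ d := by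
        apply Nat.add_le_add_left
        calc ∑ a ∈ A, (nbrs a).card ≤ ∑ _a ∈ A, 3 ^ d :=
              Finset.sum_le_sum (fun a _ => card_nbrs_le a)
          _ = A.card * 3 ^ d := by rw [Finset.sum_const, smul_eq_mul]
    _ = A.card * (3 ^ d + 1) := by ring

lemma box_card_pos (n : ℕ) : 0 < (box d n).card := by
  apply Finset.card_pos.mpr
  refine ⟨(fun _ => 0), ?_⟩
  rw [box, Finset.mem_Icc]
  constructor <;> intro i <;> simp

lemma bad_card_le (n m : ℕ) (A : Finset (V d)) :
    ((Finset.powersetCard m (box d n \ closNbr A)).filter (fun M => ¬ Sparse M)).card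
      ≤ 3 ^ d * (box d n).card ^ (m - 1) := by
  classical
  set N := (box d n).card with hN
  set Bad := (Finset.powersetCard m (box d n \ closNbr A)).filter (fun M => ¬ Sparse M)
    with hBad
  have hmemBad : ∀ M ∈ Bad, M ⊆ box d n ∧ M.card = m ∧ ¬ Sparse M := by
    intro M hM
    rw [hBad, Finset.mem_filter, Finset.mem_powersetCard] at hM
    exact ⟨hM.1.1.trans Finset.sdiff_subset, hM.1.2, hM.2⟩
  rcases Nat.lt_or_ge m 2 with hm | hm
  · -- no non-sparse set of size < 2
    have : Bad = ∅ := by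
      rw [Finset.eq_empty_iff_forall_notMem]
      intro M hM
      obtain ⟨-, hcard, hns⟩ := hmemBad M hM
      obtain ⟨hx, hy, hadj⟩ := badPair_spec hns
      have hne : (badPair M).1 ≠ (badPair M).2 := fun h => adj_irrefl _ (h ▸ hadj)
      have : 2 ≤ M.card := Finset.one_lt_card.mpr ⟨_, hx, _, hy, hne⟩
      omega
    rw [this]
    simp
  · -- inject into (adjacent pair, remaining set)
    set E := ((box d n) ×ˢ (box d n)).filter (fun p => adj p.1 p.2) with hE
    set P := (box d n).powersetCard (m - 2) with hP
    have hinj : Bad.card ≤ (E ×ˢ P).card := by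
      apply Finset.card_le_card_of_injOn (fun M => (badPair M, M \ {(badPair M).1, (badPair M).2}))
      · intro M hM
        obtain ⟨hsub, hcard, hns⟩ := hmemBad M hM
        obtain ⟨hx, hy, hadj⟩ := badPair_spec hns
        have hne : (badPair M).1 ≠ (badPair M).2 := fun h => adj_irrefl _ (h ▸ hadj)
        rw [Finset.mem_coe, Finset.mem_product]
        constructor
        · rw [hE, Finset.mem_filter, Finset.mem_product]
          exact ⟨⟨hsub hx, hsub hy⟩, hadj⟩
        · rw [hP, Finset.mem_powersetCard]
          refine ⟨(Finset.sdiff_subset).trans hsub, ?_⟩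
          rw [Finset.card_sdiff_of_subset (by
            intro z hz
            rw [Finset.mem_insert, Finset.mem_singleton] at hz
            rcases hz with rfl | rfl
            · exact hx
            · exact hy)]
          rw [Finset.card_insert_of_notMem (by simp [hne]), Finset.card_singleton, hcard]
      · intro M1 hM1 M2 hM2 heq
        rw [Prod.mk.injEq] at heq
        obtain ⟨hpair, hrest⟩ := heq
        obtain ⟨hx1, hy1, -⟩ := badPair_spec (hmemBad M1 (Finset.mem_coe.mp hM1)).2.2
        obtain ⟨hx2, hy2, -⟩ := badPair_spec (hmemBad M2 (Finset.mem_coe.mp hM2)).2.2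
        have hM1e : M1 = (M1 \ {(badPair M1).1, (badPair M1).2}) ∪
            {(badPair M1).1, (badPair M1).2} := by
          rw [Finset.sdiff_union_self_eq_union, Finset.union_eq_left.mpr (by
            intro z hz
            rw [Finset.mem_insert, Finset.mem_singleton] at hz
            rcases hz with rfl | rfl
            · exact hx1
            · exact hy1)]
        have hM2e : M2 = (M2 \ {(badPair M2).1, (badPair M2).2}) ∪
            {(badPair M2).1, (badPair M2).2} := by
          rw [Finset.sdiff_union_self_eq_union, Finset.union_eq_left.mpr (by
            intro z hz
            rw [Finset.mem_insert, Finset.mem_singleton] at hz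
            rcases hz with rfl | rfl
            · exact hx2
            · exact hy2)]
        rw [hM1e, hM2e, hrest, hpair]
    have hEcard : E.card ≤ N * 3 ^ d := by
      have : E.card ≤ ((box d n) ×ˢ (ball (0 : V d) 1)).card := by
        apply Finset.card_le_card_of_injOn (fun p => (p.1, p.2 - p.1))
        · intro p hp
          rw [hE, Finset.mem_coe, Finset.mem_filter, Finset.mem_product] at hp
          rw [Finset.mem_coe, Finset.mem_product]
          refine ⟨hp.1.1, ?_⟩
          apply mem_ball_of_dist1
          have hdd : dist1 (0 : V d) (p.2 - p.1) = dist1 p.1 p.2 := by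
            unfold dist1
            apply Finset.sum_congr rfl
            intro i _
            rw [Pi.zero_apply, zero_sub, Pi.sub_apply, abs_neg, abs_sub_comm]
          rw [hdd, adj_dist1 hp.2]
          norm_num
        · intro p1 hp1 p2 hp2 heq
          rw [Prod.mk.injEq] at heq
          obtain ⟨h1, h2⟩ := heq
          rw [h1] at h2
          exact Prod.ext h1 (sub_left_inj.mp h2)
      calc E.card ≤ ((box d n) ×ˢ (ball (0 : V d) 1)).card := this
        _ = N * 3 ^ d := by
            rw [Finset.card_product, card_ball]
    have hPcard : P.card ≤ N ^ (m - 2) := by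
      rw [hP, Finset.card_powersetCard]
      exact choose_le_pow _ _
    calc Bad.card ≤ (E ×ˢ P).card := hinj
      _ = E.card * P.card := Finset.card_product _ _
      _ ≤ (N * 3 ^ d) * N ^ (m - 2) := Nat.mul_le_mul hEcard hPcard
      _ = 3 ^ d * N ^ (m - 2 + 1) := by ring
      _ = 3 ^ d * N ^ (m - 1) := by
          have he : m - 2 + 1 = m - 1 := by omega
          rw [he]

lemma cmm_est (m n : ℕ) (A : Finset (V d)) :
    |(Cmq n m m A : ℝ) - ((box d n).card : ℝ) ^ m / (m.factorial : ℝ)| ≤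
      ((3:ℝ) ^ d + m * (A.card * (3 ^ d + 1) + m)) * ((box d n).card : ℝ) ^ (m - 1) := by
  classical
  set N := (box d n).card with hN
  set S := box d n \ closNbr A with hS
  set s := S.card with hs
  set K : ℕ := A.card * (3 ^ d + 1) + m with hK
  set Good := (Finset.powersetCard m S).filter (fun M => Sparse M) with hGood
  set Bad := (Finset.powersetCard m S).filter (fun M => ¬ Sparse M) with hBad
  have hCmq : Cmq n m m A = Good.card := by
    rw [Cmq, hGood]
    congr 1
    apply Finset.filter_congr
    intro M hM
    have hc := (Finset.mem_powersetCard.mp hM).2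
    rw [← hc]
    exact ncc_eq_card_iff_sparse
  have hGB : Good.card + Bad.card = Nat.choose s m := by
    rw [hGood, hBad, Finset.card_filter_add_card_filter_not,
      Finset.card_powersetCard]
  have hBadle : Bad.card ≤ 3 ^ d * N ^ (m - 1) := bad_card_le n m A
  have hsN : s ≤ N := Finset.card_le_card Finset.sdiff_subset
  have hNsK : N ≤ s + A.card * (3 ^ d + 1) := by
    have hsub : box d n ⊆ S ∪ closNbr A := by
      intro z hz
      rw [Finset.mem_union]
      by_cases hcz : z ∈ closNbr A
      · exact Or.inr hcz
      · exact Or.inl (Finset.mem_sdiff.mpr ⟨hz, hcz⟩)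
    calc N ≤ (S ∪ closNbr A).card := Finset.card_le_card hsub
      _ ≤ s + (closNbr A).card := Finset.card_union_le _ _
      _ ≤ s + A.card * (3 ^ d + 1) := Nat.add_le_add_left (card_closNbr_le A) _
  have hub : m.factorial * Nat.choose N m ≤ N ^ m := by
    rw [← Nat.descFactorial_eq_factorial_mul_choose]
    exact Nat.descFactorial_le_pow _ _
  have hlb : (N - K) ^ m ≤ m.factorial * Nat.choose s m := by
    rw [← Nat.descFactorial_eq_factorial_mul_choose, Nat.descFactorial_eq_prod_range]
    calc (N - K) ^ m = ∏ _i ∈ Finset.range m, (N - K) := by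
          rw [Finset.prod_const, Finset.card_range]
      _ ≤ ∏ i ∈ Finset.range m, (s - i) := by
          apply Finset.prod_le_prod'
          intro i hi
          have hi' := Finset.mem_range.mp hi
          omega
  have hchoose_mono : Nat.choose s m ≤ Nat.choose N m := Nat.choose_le_choose m hsN
  -- pass to the reals
  have hm1 : (1:ℝ) ≤ (m.factorial : ℝ) := by exact_mod_cast m.factorial_pos
  have hmpos : (0:ℝ) < (m.factorial : ℝ) := by linarith
  have hNnn : (0:ℝ) ≤ (N:ℝ) := Nat.cast_nonneg N
  have hchooseN_le : (Nat.choose N m : ℝ) ≤ (N:ℝ) ^ m / (m.factorial : ℝ) := by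
    rw [le_div_iff₀ hmpos]
    calc (Nat.choose N m : ℝ) * (m.factorial : ℝ)
        = ((m.factorial * Nat.choose N m : ℕ) : ℝ) := by push_cast; ring
      _ ≤ ((N ^ m : ℕ) : ℝ) := by exact_mod_cast hub
      _ = (N:ℝ) ^ m := by push_cast; ring
  have hchooses_ge : ((N - K : ℕ) : ℝ) ^ m / (m.factorial : ℝ) ≤ (Nat.choose s m : ℝ) := by
    rw [div_le_iff₀ hmpos]
    calc ((N - K : ℕ) : ℝ) ^ m = (((N - K) ^ m : ℕ) : ℝ) := by push_cast; ring
      _ ≤ ((m.factorial * Nat.choose s m : ℕ) : ℝ) := by exact_mod_cast hlb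
      _ = (Nat.choose s m : ℝ) * (m.factorial : ℝ) := by push_cast; ring
  have hpowdiff : (N:ℝ) ^ m - ((N - K : ℕ) : ℝ) ^ m ≤ (m:ℝ) * K * (N:ℝ) ^ (m - 1) := by
    rcases m with - | mm
    · simp
    · rw [Nat.add_sub_cancel]
      rcases le_or_gt K N with hKN | hKN
      · have hKle : (K:ℝ) ≤ (N:ℝ) := by exact_mod_cast hKN
        have hb : ((N - K : ℕ) : ℝ) = (N:ℝ) - (K:ℝ) := by
          push_cast [Nat.cast_sub hKN]; ring
        rw [hb]
        have h1 : (0:ℝ) ≤ (N:ℝ) - (K:ℝ) := by linarith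
        have h2 : (N:ℝ) - (K:ℝ) ≤ (N:ℝ) := by
          have : (0:ℝ) ≤ (K:ℝ) := Nat.cast_nonneg K
          linarith
        have hdiff := pow_diff_le h1 h2 mm
        have heq : ((mm:ℝ) + 1) * ((N:ℝ) - ((N:ℝ) - (K:ℝ))) * (N:ℝ) ^ mm
            = ((mm + 1 : ℕ):ℝ) * (K:ℝ) * (N:ℝ) ^ mm := by push_cast; ring
        rw [heq] at hdiff
        exact hdiff
      · have hz : N - K = 0 := by omega
        rw [hz]
        simp only [Nat.cast_zero]
        rw [zero_pow (Nat.succ_ne_zero mm)]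
        have hKN' : (N:ℝ) ≤ (K:ℝ) := by exact_mod_cast hKN.le
        have hpnn : (0:ℝ) ≤ (N:ℝ) ^ mm := pow_nonneg hNnn mm
        have hKnn : (0:ℝ) ≤ (K:ℝ) := Nat.cast_nonneg K
        have hmm : (0:ℝ) ≤ (mm:ℝ) := Nat.cast_nonneg mm
        have h1 : (N:ℝ) * (N:ℝ) ^ mm ≤ (K:ℝ) * (N:ℝ) ^ mm :=
          mul_le_mul_of_nonneg_right hKN' hpnn
        have h2 : (0:ℝ) ≤ (K:ℝ) * (N:ℝ) ^ mm * (mm:ℝ) :=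
          mul_nonneg (mul_nonneg hKnn hpnn) hmm
        have hps : (N:ℝ) ^ (mm + 1) = (N:ℝ) * (N:ℝ) ^ mm := by ring
        have heq2 : ((mm:ℝ) + 1) * (K:ℝ) * (N:ℝ) ^ mm
            = (K:ℝ) * (N:ℝ) ^ mm * (mm:ℝ) + (K:ℝ) * (N:ℝ) ^ mm := by ring
        push_cast
        linarith [h1, h2, hps, heq2]
  -- finish
  rw [hCmq]
  have hGoodR : (Good.card : ℝ) = (Nat.choose s m : ℝ) - (Bad.card : ℝ) := by
    have := hGB
    push_cast [← this]
    ring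
  have hBadR : (Bad.card : ℝ) ≤ (3:ℝ) ^ d * (N:ℝ) ^ (m - 1) := by
    calc (Bad.card : ℝ) ≤ ((3 ^ d * N ^ (m - 1) : ℕ) : ℝ) := by exact_mod_cast hBadle
      _ = (3:ℝ) ^ d * (N:ℝ) ^ (m - 1) := by push_cast; ring
  have hpownn : (0:ℝ) ≤ (N:ℝ) ^ (m - 1) := pow_nonneg hNnn _
  have hKC : (m:ℝ) * (K:ℝ) = (m:ℝ) * ((A.card:ℝ) * ((3:ℝ) ^ d + 1) + (m:ℝ)) := by
    rw [hK]; push_cast; ring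
  rw [abs_le]
  constructor
  · -- N^m/m! - Good ≤ C N^(m-1)
    rw [neg_le, neg_sub]
    have hstep : (N:ℝ) ^ m / (m.factorial : ℝ) - (Nat.choose s m : ℝ)
        ≤ (m:ℝ) * (K:ℝ) * (N:ℝ) ^ (m - 1) := by
      have h1 : (N:ℝ) ^ m / (m.factorial : ℝ) - (Nat.choose s m : ℝ)
          ≤ ((N:ℝ) ^ m - ((N - K : ℕ) : ℝ) ^ m) / (m.factorial : ℝ) := by
        rw [sub_div]
        have := hchooses_ge
        linarith
      have h2 : ((N:ℝ) ^ m - ((N - K : ℕ) : ℝ) ^ m) / (m.factorial : ℝ)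
          ≤ (N:ℝ) ^ m - ((N - K : ℕ) : ℝ) ^ m := by
        apply div_le_self ?_ hm1
        have hbN : ((N - K : ℕ) : ℝ) ≤ (N:ℝ) := by
          exact_mod_cast Nat.sub_le N K
        have : ((N - K : ℕ) : ℝ) ^ m ≤ (N:ℝ) ^ m :=
          pow_le_pow_left₀ (Nat.cast_nonneg _) hbN m
        linarith
      linarith [hpowdiff]
    have hGc : (N:ℝ) ^ m / (m.factorial : ℝ) - (Good.card : ℝ)
        = ((N:ℝ) ^ m / (m.factorial : ℝ) - (Nat.choose s m : ℝ)) + (Bad.card : ℝ) := by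
      rw [hGoodR]; ring
    rw [hGc]
    calc ((N:ℝ) ^ m / (m.factorial : ℝ) - (Nat.choose s m : ℝ)) + (Bad.card : ℝ)
        ≤ (m:ℝ) * (K:ℝ) * (N:ℝ) ^ (m - 1) + (3:ℝ) ^ d * (N:ℝ) ^ (m - 1) := by
          linarith [hstep, hBadR]
      _ = ((3:ℝ) ^ d + (m:ℝ) * ((A.card:ℝ) * ((3:ℝ) ^ d + 1) + (m:ℝ))) * (N:ℝ) ^ (m - 1) := by
          rw [← hKC]; ring
  · -- Good - N^m/m! ≤ C N^(m-1)
    have hGle : (Good.card : ℝ) ≤ (N:ℝ) ^ m / (m.factorial : ℝ) := by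
      calc (Good.card : ℝ) ≤ (Nat.choose s m : ℝ) := by
            exact_mod_cast le_trans (Nat.le_add_right _ _) hGB.le
        _ ≤ (Nat.choose N m : ℝ) := by exact_mod_cast hchoose_mono
        _ ≤ (N:ℝ) ^ m / (m.factorial : ℝ) := hchooseN_le
    have hCnn : (0:ℝ) ≤ ((3:ℝ) ^ d + (m:ℝ) * ((A.card:ℝ) * ((3:ℝ) ^ d + 1) + (m:ℝ))) := by
      positivity
    have := mul_nonneg hCnn hpownn
    linarith

end Counting

/-- asymptotics of `C_{m,q}^{(n)}(A)`, uniformly in `A` with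
`|A| = k - 1`. -/
theorem counting_asymptotics {d : ℕ} (hd : 2 ≤ d) (k : ℕ) (hk : 1 ≤ k)
    (m q : ℕ) (hq : q ≤ m) :
    (∃ C : ℝ, ∀ (n : ℕ) (A : Finset (V d)), A ⊆ box d n → A.card = k - 1 →
      |(Cmq n m m A : ℝ) - ((box d n).card : ℝ) ^ m / (m.factorial : ℝ)| ≤
        C * ((box d n).card : ℝ) ^ (m - 1)) ∧
    (q ≤ m - 1 → ∃ c : ℝ, ∀ (n : ℕ) (A : Finset (V d)),
      A ⊆ box d n → A.card = k - 1 →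
      (Cmq n m q A : ℝ) ≤ c * ((box d n).card : ℝ) ^ q) := by
  constructor
  · refine ⟨(3:ℝ) ^ d + (m:ℝ) * (((k - 1 : ℕ):ℝ) * ((3:ℝ) ^ d + 1) + (m:ℝ)), ?_⟩
    intro n A hA hcard
    have h := Counting.cmm_est (d := d) m n A
    rw [hcard] at h
    exact h
  · intro hqm
    refine ⟨((2:ℝ) ^ (q * (2 * m + 1) ^ d)), ?_⟩
    intro n A hA hcard
    have h := Counting.cmq_le (d := d) n m q A
    calc (Cmq n m q A : ℝ)
        ≤ ((2 ^ (q * (2 * m + 1) ^ d) * (box d n).card ^ q : ℕ) : ℝ) := by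
          exact_mod_cast h
      _ = (2:ℝ) ^ (q * (2 * m + 1) ^ d) * ((box d n).card : ℝ) ^ q := by
          push_cast; ring
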